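/- arXiv:1111.1517 — 3 statements merged into one kernel-verified Lean document; each statement's English description precedes it below -/
import Mathlib

section
/- Let $G_\Gamma$ be a right-angled Artin group and let $c_{x,Y}$, $c_{y,Z}$ be partial conjugations with $v(x) \notin Z$, $v(y) \notin Y$, $v(x) \neq v(y)$, and such that at least one of the following holds: (a) $Y \cap Z = \emptyset$, or (b) $v(y)$ is adjacent to $v(x)$ in $\Gamma$. Then $c_{x,Y}$ and $c_{y,Z}$ commute: $c_{x,Y} \circ c_{y,Z} = c_{y,Z} \circ c_{x,Y}$. -/
/-- Relations for the right-angled Artin group on a simplicial graph. -/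
def raagRels {V : Type} (Γ : SimpleGraph V) : Set (FreeGroup V) :=
  {r | ∃ v w, Γ.Adj v w ∧
    r = FreeGroup.of v * FreeGroup.of w * (FreeGroup.of v)⁻¹ * (FreeGroup.of w)⁻¹}

/-- The right-angled Artin group on `Γ`. -/
abbrev RAAG {V : Type} (Γ : SimpleGraph V) : Type := PresentedGroup (raagRels Γ)

/-- The generator of `RAAG Γ` corresponding to a vertex. -/
def gen {V : Type} (Γ : SimpleGraph V) (v : V) : RAAG Γ := PresentedGroup.of v

/-- The element of `L = V ∪ V⁻¹` coded by a vertex and a sign. -/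
def lit {V : Type} (Γ : SimpleGraph V) (x : V × Bool) : RAAG Γ :=
  if x.2 then gen Γ x.1 else (gen Γ x.1)⁻¹

/-- Formal inversion on `L = V × Bool`. -/
def invL {V : Type} (x : V × Bool) : V × Bool := (x.1, !x.2)

/-- The star of a vertex. -/
def starS {V : Type} (Γ : SimpleGraph V) (v : V) : Set V := insert v (Γ.neighborSet v)

/-- The graph `Γ ∖ st(v)`: the induced graph on the complement of the star of `v`
(vertices of the star are kept but isolated). -/
def delStar {V : Type} (Γ : SimpleGraph V) (v : V) : SimpleGraph V where
  Adj a b := Γ.Adj a b ∧ a ∉ starS Γ v ∧ b ∉ starS Γ v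
  symm := ⟨fun _ _ ⟨h1, h2, h3⟩ => ⟨h1.symm, h3, h2⟩⟩
  loopless := ⟨fun a ⟨h1, _, _⟩ => Γ.loopless.irrefl a h1⟩

/-- `Y` is a nonempty union of connected components of `Γ ∖ st(v)`. -/
def IsPCDomain {V : Type} (Γ : SimpleGraph V) (v : V) (Y : Set V) : Prop :=
  Y.Nonempty ∧ (∀ y ∈ Y, y ∉ starS Γ v) ∧
    ∀ y ∈ Y, ∀ z, (delStar Γ v).Reachable y z → z ∈ Y

/-- `φ` is the partial conjugation `c_{x,Y}`: it sends each vertex of `Y` to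
`x⁻¹ y x` and fixes all other vertices. -/
def IsPartialConj {V : Type} (Γ : SimpleGraph V) (x : RAAG Γ) (Y : Set V)
    (φ : RAAG Γ ≃* RAAG Γ) : Prop :=
  (∀ w ∈ Y, φ (gen Γ w) = x⁻¹ * gen Γ w * x) ∧ (∀ w ∉ Y, φ (gen Γ w) = gen Γ w)

/-- `φ` is the type 2 Whitehead automorphism `(A, a)`.  Here `(w, true) ∈ A`
codes `w ∈ A` and `(w, false) ∈ A` codes `w⁻¹ ∈ A`. -/
def IsWhitehead {V : Type} (Γ : SimpleGraph V) (A : Set (V × Bool)) (a : V × Bool)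
    (φ : RAAG Γ ≃* RAAG Γ) : Prop :=
  φ (lit Γ a) = lit Γ a ∧ ∀ w : V, w ≠ a.1 →
    (((w, true) ∉ A ∧ (w, false) ∉ A) → φ (gen Γ w) = gen Γ w) ∧
    (((w, true) ∈ A ∧ (w, false) ∉ A) → φ (gen Γ w) = gen Γ w * lit Γ a) ∧
    (((w, true) ∉ A ∧ (w, false) ∈ A) → φ (gen Γ w) = (lit Γ a)⁻¹ * gen Γ w) ∧
    (((w, true) ∈ A ∧ (w, false) ∈ A) → φ (gen Γ w) = (lit Γ a)⁻¹ * gen Γ w * lit Γ a)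

/-! The composites `φ ∘ ψ` and `ψ ∘ φ` agree on every generator `w`. On `Y ∩ Z` both
conjugate `w` by `x` and by `y`, in opposite orders, and `Y ∩ Z` is nonempty only when
`v(x)` and `v(y)` are adjacent, so that `x` and `y` commute. Off `Y ∩ Z` at most one of
`φ, ψ` moves `w`, and it fixes the conjugating letter of the other since `v(x) ∉ Z` and
`v(y) ∉ Y`. -/

section RAAG

variable {V : Type} (Γ : SimpleGraph V)

theorem gen_commute_of_adj {v w : V} (h : Γ.Adj v w) : Commute (gen Γ v) (gen Γ w) := by
  have hrel : FreeGroup.of v * FreeGroup.of w * (FreeGroup.of v)⁻¹ * (FreeGroup.of w)⁻¹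
      ∈ raagRels Γ := ⟨v, w, h, rfl⟩
  have hmk : PresentedGroup.mk (raagRels Γ)
      (FreeGroup.of v * FreeGroup.of w * (FreeGroup.of v)⁻¹ * (FreeGroup.of w)⁻¹) = 1 :=
    (QuotientGroup.eq_one_iff _).mpr (Subgroup.subset_normalClosure hrel)
  simp only [map_mul, map_inv] at hmk
  exact commutatorElement_eq_one_iff_commute.mp hmk

theorem lit_commute_of_adj {a b : V × Bool} (h : Γ.Adj a.1 b.1) :
    Commute (lit Γ a) (lit Γ b) := by
  have hc := gen_commute_of_adj Γ h
  rcases a with ⟨_, _ | _⟩ <;> rcases b with ⟨_, _ | _⟩ <;> simp only [lit]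
  exacts [hc.inv_inv, hc.inv_left, hc.inv_right, hc]

theorem RAAG.mulEquiv_ext {f g : RAAG Γ ≃* RAAG Γ} (h : ∀ v, f (gen Γ v) = g (gen Γ v)) :
    f = g :=
  MulEquiv.toMonoidHom_injective (PresentedGroup.ext h)

variable {Γ}

theorem IsPartialConj.map_lit_of_notMem {x : RAAG Γ} {Y : Set V} {φ : RAAG Γ ≃* RAAG Γ}
    (hφ : IsPartialConj Γ x Y φ) {v : V} (hv : v ∉ Y) (ε : Bool) :
    φ (lit Γ (v, ε)) = lit Γ (v, ε) := by
  cases ε <;> simp [lit, hφ.2 v hv]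

theorem IsPartialConj.apply_apply_gen_comm {x y : RAAG Γ} {Y Z : Set V}
    {φ ψ : RAAG Γ ≃* RAAG Γ} (hφ : IsPartialConj Γ x Y φ) (hψ : IsPartialConj Γ y Z ψ)
    (hψx : ψ x = x) (hφy : φ y = y) {w : V} (hw : w ∈ Y → w ∈ Z → Commute x y) :
    ψ (φ (gen Γ w)) = φ (ψ (gen Γ w)) := by
  by_cases hwY : w ∈ Y <;> by_cases hwZ : w ∈ Z
  · simp only [hφ.1 w hwY, hψ.1 w hwZ, map_mul, map_inv, hψx, hφy]
    calc x⁻¹ * (y⁻¹ * gen Γ w * y) * x = (y * x)⁻¹ * gen Γ w * (y * x) := by group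
      _ = (x * y)⁻¹ * gen Γ w * (x * y) := by rw [(hw hwY hwZ).eq]
      _ = y⁻¹ * (x⁻¹ * gen Γ w * x) * y := by group
  · simp only [hφ.1 w hwY, hψ.2 w hwZ, map_mul, map_inv, hψx]
  · simp only [hφ.2 w hwY, hψ.1 w hwZ, map_mul, map_inv, hφy]
  · simp only [hφ.2 w hwY, hψ.2 w hwZ]

end RAAG

theorem stmt_3_general {V : Type} (Γ : SimpleGraph V)
    (vx vy : V) (εx εy : Bool) (Y Z : Set V)
    (hxZ : vx ∉ Z) (hyY : vy ∉ Y)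
    (hcase : Y ∩ Z = ∅ ∨ Γ.Adj vx vy)
    (φ ψ : RAAG Γ ≃* RAAG Γ)
    (hφ : IsPartialConj Γ (lit Γ (vx, εx)) Y φ)
    (hψ : IsPartialConj Γ (lit Γ (vy, εy)) Z ψ) :
    φ.trans ψ = ψ.trans φ := by
  refine RAAG.mulEquiv_ext Γ fun w => ?_
  refine hφ.apply_apply_gen_comm hψ (hψ.map_lit_of_notMem hxZ εx)
    (hφ.map_lit_of_notMem hyY εy) fun hwY hwZ => lit_commute_of_adj Γ ?_
  exact hcase.resolve_left (Set.nonempty_iff_ne_empty.mp ⟨w, hwY, hwZ⟩)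

/-- Commuting partial conjugations: if `v(x) ∉ Z`, `v(y) ∉ Y`, `v(x) ≠ v(y)` and
either `Y ∩ Z = ∅` or `v(y)` is adjacent to `v(x)`, then `c_{x,Y}` and `c_{y,Z}`
commute. -/
theorem stmt_3 {V : Type} [Fintype V] (Γ : SimpleGraph V)
    (vx vy : V) (εx εy : Bool) (Y Z : Set V)
    (hY : IsPCDomain Γ vx Y) (hZ : IsPCDomain Γ vy Z)
    (hxZ : vx ∉ Z) (hyY : vy ∉ Y) (hne : vx ≠ vy)
    (hcase : Y ∩ Z = ∅ ∨ Γ.Adj vx vy)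
    (φ ψ : RAAG Γ ≃* RAAG Γ)
    (hφ : IsPartialConj Γ (lit Γ (vx, εx)) Y φ)
    (hψ : IsPartialConj Γ (lit Γ (vy, εy)) Z ψ) :
    φ.trans ψ = ψ.trans φ :=
  stmt_3_general Γ vx vy εx εy Y Z hxZ hyY hcase φ ψ hφ hψ
end

section
/- Let $\Gamma$ be a finite simplicial graph, $\mathcal{Z} = \bigcap_{v \in V} st(v)$, and $\Gamma'$ the full subgraph of $\Gamma$ spanned by $V \setminus \mathcal{Z}$. Assume that the center of $G_\Gamma$ is exactly the subgroup generated by $\mathcal{Z}$. Then the map sending a vertex $v \in V \setminus \mathcal{Z}$ to the inner automorphism $\omega_v : g \mapsto v^{-1} g v$ extends to a group isomorphism $G_{\Gamma'} \cong Inn(G_\Gamma)$. -/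
/-
The retraction `G_Γ → G_{Γ'}` that kills the vertices of `𝒵` splits the inclusion
`G_{Γ'} → G_Γ`, and its kernel is the center: the vertices of `𝒵` are central, and modulo the
center every element of `G_Γ` is the image of its retraction. A split epimorphism `ρ` with
`ker ρ = Z(G)` identifies its target with `G / Z(G) ≅ Inn(G)`.
-/

theorem MulAut.conj_eq_one_iff {G : Type*} [Group G] {g : G} :
    MulAut.conj g = 1 ↔ g ∈ Subgroup.center G := by
  rw [Subgroup.mem_center_iff, MulEquiv.ext_iff]
  refine forall_congr' fun x => ?_
  rw [MulAut.conj_apply, MulAut.one_apply, mul_inv_eq_iff_eq_mul, eq_comm]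

theorem MulAut.exists_mulEquiv_conj_range {G H : Type*} [Group G] [Group H]
    (ι : H →* G) (ρ : G →* H) (hρι : ∀ h, ρ (ι h) = h) (hker : ρ.ker = Subgroup.center G) :
    ∃ e : H ≃* (MulAut.conj : G →* MulAut G).range,
      ∀ h, (e h : MulAut G) = MulAut.conj (ι h) := by
  let f := (MulAut.conj.comp ι).codRestrict MulAut.conj.range fun h => ⟨ι h, rfl⟩
  have injective : Function.Injective f := by
    refine (injective_iff_map_eq_one f).mpr fun h hh => ?_
    have : ι h ∈ ρ.ker := hker ▸ MulAut.conj_eq_one_iff.mp (congrArg Subtype.val hh)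
    exact (hρι h).symm.trans this
  have surjective : Function.Surjective f := by
    rintro ⟨_, x, rfl⟩
    refine ⟨ρ x, Subtype.ext ?_⟩
    have : x * (ι (ρ x))⁻¹ ∈ Subgroup.center G := by
      rw [← hker, MonoidHom.mem_ker, map_mul, map_inv, hρι, mul_inv_cancel]
    rw [← MulAut.conj_eq_one_iff, map_mul, map_inv, mul_inv_eq_one] at this
    exact this.symm
  exact ⟨MulEquiv.ofBijective f ⟨injective, surjective⟩, fun _ => rfl⟩

namespace RAAG

variable {V : Type} {Γ : SimpleGraph V} {G : Type*} [Group G]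

theorem commute_gen {v w : V} (h : Γ.Adj v w) : Commute (gen Γ v) (gen Γ w) := by
  rw [← commutatorElement_eq_one_iff_commute]
  simpa [gen, PresentedGroup.of, commutatorElement_def] using
    PresentedGroup.one_of_mem (rels := raagRels Γ) ⟨v, w, h, rfl⟩

def lift (f : V → G) (hf : ∀ v w, Γ.Adj v w → Commute (f v) (f w)) : RAAG Γ →* G :=
  PresentedGroup.toGroup (rels := raagRels Γ) (f := f) <| by
    rintro r ⟨v, w, hvw, rfl⟩
    simpa [commutatorElement_def] using commutatorElement_eq_one_iff_commute.mpr (hf v w hvw)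

@[simp]
theorem lift_gen (f : V → G) (hf : ∀ v w, Γ.Adj v w → Commute (f v) (f w)) (v : V) :
    lift f hf (gen Γ v) = f v :=
  PresentedGroup.toGroup.of _

theorem hom_ext {φ ψ : RAAG Γ →* G} (h : ∀ v, φ (gen Γ v) = ψ (gen Γ v)) : φ = ψ :=
  PresentedGroup.ext h

end RAAG

section NonCentral

variable {V : Type} (Γ : SimpleGraph V)

/-- The graph `Γ'` spanned by `V ∖ 𝒵`, where `𝒵 = ⋂_v st(v)`. -/
abbrev nonCentralSubgraph : SimpleGraph {v : V // ¬ ∀ u : V, v ∈ starS Γ u} :=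
  SimpleGraph.comap Subtype.val Γ

-- `v ↦ v⁻¹` because `ω_v = MulAut.conj v⁻¹`.
def inclInv : RAAG (nonCentralSubgraph Γ) →* RAAG Γ :=
  RAAG.lift (fun v => (gen Γ v.1)⁻¹) fun _ _ hvw => (RAAG.commute_gen (Γ := Γ) hvw).inv_inv

open Classical in
noncomputable def retractInv : RAAG Γ →* RAAG (nonCentralSubgraph Γ) :=
  RAAG.lift (fun v => if hv : ∀ u, v ∈ starS Γ u then 1 else (gen _ ⟨v, hv⟩)⁻¹)
    fun v w hvw => by
      by_cases hv : ∀ u, v ∈ starS Γ u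
      · simp only [dif_pos hv, Commute.one_left]
      by_cases hw : ∀ u, w ∈ starS Γ u
      · simp only [dif_pos hw, Commute.one_right]
      simp only [dif_neg hv, dif_neg hw]
      exact
        (RAAG.commute_gen (Γ := nonCentralSubgraph Γ) (v := ⟨v, hv⟩) (w := ⟨w, hw⟩) hvw).inv_inv

theorem retractInv_inclInv (x : RAAG (nonCentralSubgraph Γ)) :
    retractInv Γ (inclInv Γ x) = x := by
  have : (retractInv Γ).comp (inclInv Γ) = MonoidHom.id _ :=
    RAAG.hom_ext fun v => by simp [retractInv, inclInv, v.2]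
  exact DFunLike.congr_fun this x

theorem ker_retractInv
    (hcenter : Subgroup.center (RAAG Γ) =
      Subgroup.closure (gen Γ '' {z : V | ∀ v : V, z ∈ starS Γ v})) :
    (retractInv Γ).ker = Subgroup.center (RAAG Γ) := by
  refine le_antisymm (fun x hx => ?_) ?_
  · -- modulo the center, `x` agrees with its image under `inclInv ∘ retractInv`
    let π := QuotientGroup.mk' (Subgroup.center (RAAG Γ))
    have hπ : (π.comp (inclInv Γ)).comp (retractInv Γ) = π := RAAG.hom_ext fun v => by
      by_cases hv : ∀ u, v ∈ starS Γ u
      · have : π (gen Γ v) = 1 :=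
          (QuotientGroup.eq_one_iff _).mpr (hcenter ▸ Subgroup.subset_closure ⟨v, hv, rfl⟩)
        simp [retractInv, hv, this]
      · simp [retractInv, inclInv, hv, π]
    rw [← QuotientGroup.eq_one_iff]
    show π x = 1
    rw [← hπ]
    simp [MonoidHom.mem_ker.mp hx]
  · rw [hcenter, Subgroup.closure_le]
    rintro _ ⟨z, hz, rfl⟩
    rw [SetLike.mem_coe, MonoidHom.mem_ker, retractInv, RAAG.lift_gen]
    exact dif_pos hz

end NonCentral

theorem stmt_9_general {V : Type} (Γ : SimpleGraph V)
    (hcenter : Subgroup.center (RAAG Γ) =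
      Subgroup.closure (gen Γ '' {z : V | ∀ v : V, z ∈ starS Γ v})) :
    ∃ e : RAAG (SimpleGraph.comap
        (Subtype.val : {v : V // ¬ ∀ u : V, v ∈ starS Γ u} → V) Γ) ≃*
          (MulAut.conj : RAAG Γ →* MulAut (RAAG Γ)).range,
      ∀ v : {v : V // ¬ ∀ u : V, v ∈ starS Γ u},
        (e (gen _ v) : MulAut (RAAG Γ)) = MulAut.conj ((gen Γ v.1)⁻¹) := by
  obtain ⟨e, he⟩ := MulAut.exists_mulEquiv_conj_range (inclInv Γ) (retractInv Γ)
    (retractInv_inclInv Γ) (ker_retractInv Γ hcenter)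
  exact ⟨e, fun v => (he _).trans (by simp [inclInv])⟩

/-- If the center of `RAAG Γ` is the subgroup generated by `𝒵 = ⋂_v st(v)`,
then `v ↦ ω_v` (for `v ∉ 𝒵`) extends to an isomorphism from the RAAG of the
full subgraph on `V ∖ 𝒵` onto `Inn(G_Γ)`. -/
theorem stmt_9 {V : Type} [Fintype V] (Γ : SimpleGraph V)
    (hcenter : Subgroup.center (RAAG Γ) =
      Subgroup.closure (gen Γ '' {z : V | ∀ v : V, z ∈ starS Γ v})) :
    ∃ e : RAAG (SimpleGraph.comap
        (Subtype.val : {v : V // ¬ ∀ u : V, v ∈ starS Γ u} → V) Γ) ≃*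
          (MulAut.conj : RAAG Γ →* MulAut (RAAG Γ)).range,
      ∀ v : {v : V // ¬ ∀ u : V, v ∈ starS Γ u},
        (e (gen _ v) : MulAut (RAAG Γ)) = MulAut.conj ((gen Γ v.1)⁻¹) :=
  stmt_9_general Γ hcenter
end

section
/- Let $\Gamma$ be a finite simplicial graph, $(A,a)$ a type 2 Whitehead automorphism of $G_\Gamma$, and $b \in L$ with $b \notin A$ and $b^{-1} \notin A$. Then $(A,a)$ commutes with the inner automorphism $\omega_b = (L - lk_L(b) - b^{-1}, b)$ given by conjugation by $b$: $(A,a) \circ \omega_b \circ (A,a)^{-1} = \omega_b$. -/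
theorem MulAut.mul_conj_mul_inv {G : Type*} [Group G] (φ : MulAut G) (g : G) :
    φ * MulAut.conj g * φ⁻¹ = MulAut.conj (φ g) := by
  ext x
  simp only [MulAut.mul_apply, MulAut.conj_apply, map_mul, map_inv, MulAut.apply_inv_self]

lemma eq_or_invL_eq_of_fst_eq {V : Type} {x y : V × Bool} (h : x.1 = y.1) :
    x = y ∨ invL x = y := by
  rcases Bool.eq_or_eq_not x.2 y.2 with hs | hs
  · exact .inl (Prod.ext h hs)
  · exact .inr (Prod.ext h (by simp [invL, hs]))

lemma fst_ne_of_notMem {V : Type} {A : Set (V × Bool)} {a b : V × Bool}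
    (haA : a ∈ A) (hbA : b ∉ A) (hbA' : invL b ∉ A) : b.1 ≠ a.1 := by
  intro h
  rcases eq_or_invL_eq_of_fst_eq h with rfl | hinv
  · exact hbA haA
  · exact hbA' (hinv ▸ haA)

lemma IsWhitehead.map_lit_of_notMem {V : Type} {Γ : SimpleGraph V} {A : Set (V × Bool)}
    {a b : V × Bool} {φ : RAAG Γ ≃* RAAG Γ} (hφ : IsWhitehead Γ A a φ)
    (hab : b.1 ≠ a.1) (hbA : b ∉ A) (hbA' : invL b ∉ A) : φ (lit Γ b) = lit Γ b := by
  obtain ⟨v, s⟩ := b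
  have hgen : φ (gen Γ v) = gen Γ v := by
    refine (hφ.2 v hab).1 ⟨fun h => ?_, fun h => ?_⟩ <;> cases s <;> simp_all [invL]
  cases s <;> simp [lit, hgen]

theorem stmt_13_general {V : Type} (Γ : SimpleGraph V)
    (A : Set (V × Bool)) (a b : V × Bool)
    (haA : a ∈ A) (hbA : b ∉ A) (hbA' : invL b ∉ A)
    (φ : MulAut (RAAG Γ)) (hφ : IsWhitehead Γ A a φ) :
    φ * MulAut.conj ((lit Γ b)⁻¹) * φ⁻¹ = MulAut.conj ((lit Γ b)⁻¹) := by
  have hφb : φ (lit Γ b) = lit Γ b :=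
    hφ.map_lit_of_notMem (fst_ne_of_notMem haA hbA hbA') hbA hbA'
  rw [MulAut.mul_conj_mul_inv, map_inv, hφb]

/-- If `b ∉ A` and `b⁻¹ ∉ A`, the type 2 Whitehead automorphism `(A,a)`
commutes with the inner automorphism `ω_b : g ↦ b⁻¹ g b`. -/
theorem stmt_13 {V : Type} [Fintype V] (Γ : SimpleGraph V)
    (A : Set (V × Bool)) (a b : V × Bool)
    (haA : a ∈ A) (haA' : invL a ∉ A) (hbA : b ∉ A) (hbA' : invL b ∉ A)
    (φ : MulAut (RAAG Γ)) (hφ : IsWhitehead Γ A a φ) :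
    φ * MulAut.conj ((lit Γ b)⁻¹) * φ⁻¹ = MulAut.conj ((lit Γ b)⁻¹) :=
  stmt_13_general Γ A a b haA hbA hbA' φ hφ
end
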